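/- Let p ∈ ℕ⁺ and let a ∈ [0,1)^p, b ∈ (0,1]^p with a_l < b_l for each coordinate l. Then the sequence of functions 1_J(x,a,b) = ∏_{l=1}^p 1_J(x_l, a_l, b_l), J = 0,1,2,…, is uniformly bounded on the open cube (0,1)^p: there exists M such that |1_J(x,a,b)| ≤ M for all J ∈ ℕ and all x ∈ (0,1)^p. -/

import Mathlib

/-- `cfun j x`: c₀(x)=1, c_{2j-1}(x)=cos((2j-1)x), c_{2j}(x)=sin((2j-1)x). -/
noncomputable def cfun (j : ℕ) (x : ℝ) : ℝ :=
  if j = 0 then 1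
  else if j % 2 = 1 then Real.cos ((j : ℝ) * x)
  else Real.sin (((j : ℝ) - 1) * x)

/-- `gfun j a b`: the coefficients g_j(a,b). -/
noncomputable def gfun (j : ℕ) (a b : ℝ) : ℝ :=
  if j = 0 then
    1 - (1 / 2) * ((if 0 < a then (1 : ℝ) else 0) + (if b < 1 then (1 : ℝ) else 0))
  else if j % 2 = 1 then
    (2 / (Real.pi * (j : ℝ))) *
      ((if b < 1 then (1 : ℝ) else 0) * Real.sin ((j : ℝ) * b) -
        (if 0 < a then (1 : ℝ) else 0) * Real.sin ((j : ℝ) * a))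
  else
    (2 / (Real.pi * ((j : ℝ) - 1))) *
      ((if 0 < a then (1 : ℝ) else 0) * Real.cos (((j : ℝ) - 1) * a) -
        (if b < 1 then (1 : ℝ) else 0) * Real.cos (((j : ℝ) - 1) * b))

/-- Indicator of the open interval (a,b). -/
noncomputable def indIoo (a b x : ℝ) : ℝ := if a < x ∧ x < b then 1 else 0

/-- The Jth partial sum 1_J(x,a,b) = Σ_{j=0}^{2J} c_j(x)·g_j(a,b). -/
noncomputable def oneJ (J : ℕ) (x a b : ℝ) : ℝ :=
  ∑ j ∈ Finset.range (2 * J + 1), cfun j x * gfun j a b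

/-- p-dimensional partial sum: 1_J(x,a,b) = ∏_{l} 1_J(x_l,a_l,b_l). -/
noncomputable def oneJp {p : ℕ} (J : ℕ) (x a b : Fin p → ℝ) : ℝ :=
  ∏ l, oneJ J (x l) (a l) (b l)

/-- p-dimensional indicator: 𝟙(a<x<b) = ∏_l 𝟙(a_l<x_l<b_l). -/
noncomputable def indBox {p : ℕ} (a b x : Fin p → ℝ) : ℝ :=
  ∏ l, indIoo (a l) (b l) (x l)

/-! The identity `sin (a - b) = sin a cos b - cos a sin b` turns `1_J(x,a,b)` into
`g₀ + (2/π) (𝟙(b<1) S_J(b-x) + 𝟙(a>0) S_J(x-a))`, where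
`S_J(t) = ∑_{j<J} sin((2j+1)t)/(2j+1)` is a partial sum of the Fourier series of a square wave.
For `0 < |t| ≤ 1` split `S_J(t)` at `m = ⌈1/|t|⌉`: the first `m` terms are each at most `|t|`,
and since `sin t · ∑_{j<n} sin((2j+1)t) = sin²(nt)`, Abel summation bounds the rest by
`2 / (|sin t| (2m+1))`, which Jordan's inequality `|sin t| ≥ 2|t|/π` keeps below `2`.
So `|S_J| ≤ 4`, `|1_J| ≤ 9` on `[0,1]`, and the product is at most `9^p`. -/

open Finset Real

theorem norm_sum_Ico_smul_le_of_antitone {E : Type*} [NormedAddCommGroup E] [NormedSpace ℝ E]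
    {w : ℕ → ℝ} {z : ℕ → E} {B : ℝ} (hw : Antitone w) (hw0 : ∀ i, 0 ≤ w i)
    (hz : ∀ n, ‖∑ i ∈ range n, z i‖ ≤ B) (m n : ℕ) :
    ‖∑ i ∈ Ico m n, w i • z i‖ ≤ 2 * B * w m := by
  have hB : 0 ≤ B := by simpa using hz 0
  have hwm := hw0 m
  rcases le_or_gt n m with hnm | hmn
  · rw [Ico_eq_empty_of_le hnm, sum_empty, norm_zero]
    positivity
  have hdiff : ‖∑ i ∈ Ico m (n - 1), (w (i + 1) - w i) • ∑ k ∈ range (i + 1), z k‖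
      ≤ B * (w m - w (n - 1)) :=
    calc _ ≤ ∑ i ∈ Ico m (n - 1), (w i - w (i + 1)) * B := by
          refine norm_sum_le_of_le _ fun i _ => ?_
          have hwi : w (i + 1) ≤ w i := hw i.le_succ
          rw [norm_smul, Real.norm_eq_abs, abs_of_nonpos (sub_nonpos.2 hwi), neg_sub]
          exact mul_le_mul_of_nonneg_left (hz _) (sub_nonneg.2 hwi)
      _ = B * (w m - w (n - 1)) := by
          rw [← sum_mul, mul_comm]
          congr 1
          simpa [sub_eq_neg_add, add_comm] using
            sum_Ico_sub (fun i => -w i) (Nat.le_sub_one_of_lt hmn)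
  rw [sum_Ico_by_parts w z hmn]
  calc _ ≤ ‖w (n - 1) • ∑ i ∈ range n, z i‖ + ‖w m • ∑ i ∈ range m, z i‖
        + ‖∑ i ∈ Ico m (n - 1), (w (i + 1) - w i) • ∑ k ∈ range (i + 1), z k‖ :=
        norm_sub_le_of_le (norm_sub_le _ _) le_rfl
    _ ≤ w (n - 1) * B + w m * B + B * (w m - w (n - 1)) := by
        rw [norm_smul, norm_smul, Real.norm_of_nonneg (hw0 _), Real.norm_of_nonneg hwm]
        gcongr
        · exact hw0 _
        · exact hz n
        · exact hz m
    _ = 2 * B * w m := by ring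

theorem sin_mul_sum_range_sin_odd (t : ℝ) (n : ℕ) :
    sin t * ∑ j ∈ range n, sin ((2 * j + 1) * t) = sin (n * t) ^ 2 := by
  induction n with
  | zero => simp
  | succ n ih =>
    rw [sum_range_succ, mul_add, ih]
    push_cast
    have e1 : (2 * (n : ℝ) + 1) * t = n * t + (n + 1) * t := by ring
    have e2 : ((n : ℝ) + 1) * t = n * t + t := by ring
    rw [e1, sin_add, e2, sin_add, cos_add]
    nlinarith [sin_sq_add_cos_sq ((n : ℝ) * t), sin_sq_add_cos_sq t]

theorem abs_sum_range_sin_odd_le {t : ℝ} (ht : sin t ≠ 0) (n : ℕ) :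
    |∑ j ∈ range n, sin ((2 * j + 1) * t)| ≤ |sin t|⁻¹ := by
  have hmul : |sin t| * |∑ j ∈ range n, sin ((2 * j + 1) * t)| = sin (n * t) ^ 2 := by
    rw [← abs_mul, sin_mul_sum_range_sin_odd, abs_sq]
  rw [← one_div, le_div_iff₀ (abs_pos.2 ht), mul_comm, hmul]
  exact sin_sq_le_one _

noncomputable def oddSineSum (J : ℕ) (t : ℝ) : ℝ :=
  ∑ j ∈ range J, sin ((2 * j + 1) * t) / (2 * j + 1)

theorem abs_oddSineSum_le_mul (J : ℕ) (t : ℝ) : |oddSineSum J t| ≤ J * |t| :=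
  calc |oddSineSum J t| ≤ ∑ j ∈ range J, |sin ((2 * j + 1) * t) / (2 * j + 1)| :=
        abs_sum_le_sum_abs _ _
    _ ≤ ∑ _j ∈ range J, |t| := by
        refine sum_le_sum fun j _ => ?_
        have hj : (0 : ℝ) < 2 * j + 1 := by positivity
        rw [abs_div, abs_of_pos hj, div_le_iff₀ hj]
        calc |sin ((2 * j + 1) * t)| ≤ |(2 * j + 1) * t| := abs_sin_le_abs
          _ = |t| * (2 * j + 1) := by rw [abs_mul, abs_of_pos hj, mul_comm]
    _ = J * |t| := by rw [sum_const, card_range, nsmul_eq_mul]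

theorem abs_sum_Ico_sin_odd_div_le {t : ℝ} (ht : sin t ≠ 0) (m n : ℕ) :
    |∑ j ∈ Ico m n, sin ((2 * j + 1) * t) / (2 * j + 1)| ≤
      2 * |sin t|⁻¹ * (2 * (m : ℝ) + 1)⁻¹ := by
  have hw : Antitone fun i : ℕ => (2 * (i : ℝ) + 1)⁻¹ := fun i j hij => by
    dsimp only
    gcongr
  simpa [div_eq_inv_mul] using
    norm_sum_Ico_smul_le_of_antitone hw (fun i => by positivity)
      (fun n => (Real.norm_eq_abs _).trans_le (abs_sum_range_sin_odd_le ht n)) m n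

theorem abs_oddSineSum_le {t : ℝ} (ht : |t| ≤ 1) (J : ℕ) : |oddSineSum J t| ≤ 4 := by
  rcases eq_or_ne t 0 with rfl | ht0
  · simp [oddSineSum]
  have htpos : 0 < |t| := abs_pos.2 ht0
  set m := ⌈|t|⁻¹⌉₊
  have hm_ge : 1 ≤ m * |t| := by
    rw [← div_le_iff₀ htpos, one_div]
    exact Nat.le_ceil _
  have hm_le : m * |t| ≤ 2 := by
    have := Nat.ceil_lt_add_one (inv_nonneg.2 htpos.le)
    calc m * |t| ≤ (|t|⁻¹ + 1) * |t| := by gcongr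
      _ = 1 + |t| := by field_simp
      _ ≤ 2 := by linarith
  have hsin : 2 / π * |t| ≤ |sin t| := mul_abs_le_abs_sin (ht.trans (by linarith [pi_gt_three]))
  have hsin0 : sin t ≠ 0 := abs_pos.1 (lt_of_lt_of_le (by positivity) hsin)
  rcases le_total J m with hJm | hmJ
  · calc |oddSineSum J t| ≤ J * |t| := abs_oddSineSum_le_mul J t
      _ ≤ m * |t| := by gcongr
      _ ≤ 4 := by linarith
  have htail : 2 * |sin t|⁻¹ * (2 * (m : ℝ) + 1)⁻¹ ≤ 2 := by
    have hden : 1 ≤ |sin t| * (2 * m + 1) :=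
      calc (1 : ℝ) ≤ 4 / π * (m * |t|) := by
            rw [div_mul_eq_mul_div, le_div_iff₀ pi_pos]
            nlinarith [pi_le_four]
        _ ≤ 2 / π * |t| * (2 * m + 1) := by
            rw [show 2 / π * |t| * (2 * m + 1) = 4 / π * (m * |t|) + 2 / π * |t| by ring]
            exact le_add_of_nonneg_right (by positivity)
        _ ≤ |sin t| * (2 * m + 1) := by gcongr
    rw [mul_assoc, ← mul_inv]
    exact mul_le_of_le_one_right (by norm_num) (inv_le_one_of_one_le₀ hden)
  calc |oddSineSum J t|
      = |oddSineSum m t + ∑ j ∈ Ico m J, sin ((2 * j + 1) * t) / (2 * j + 1)| := by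
        rw [oddSineSum, oddSineSum, sum_range_add_sum_Ico _ hmJ]
    _ ≤ m * |t| + 2 * |sin t|⁻¹ * (2 * (m : ℝ) + 1)⁻¹ :=
        (abs_add_le _ _).trans (add_le_add (abs_oddSineSum_le_mul m t)
          (abs_sum_Ico_sin_odd_div_le hsin0 m J))
    _ ≤ 4 := by linarith

theorem cfun_mul_gfun_add_cfun_mul_gfun (j : ℕ) (x a b : ℝ) :
    cfun (2 * j + 1) x * gfun (2 * j + 1) a b + cfun (2 * j + 2) x * gfun (2 * j + 2) a b =
      2 / π * ((if b < 1 then 1 else 0) * (sin ((2 * j + 1) * (b - x)) / (2 * j + 1)) +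
        (if 0 < a then 1 else 0) * (sin ((2 * j + 1) * (x - a)) / (2 * j + 1))) := by
  have hodd : (2 * j + 1) % 2 = 1 := by omega
  have heven : (2 * j + 2) % 2 ≠ 1 := by omega
  simp only [cfun, gfun, if_neg (Nat.succ_ne_zero _), hodd, heven, if_true, if_false]
  have hj : (2 * j + 1 : ℝ) ≠ 0 := by positivity
  push_cast
  rw [show (2 * j + 2 : ℝ) - 1 = 2 * j + 1 by ring]
  simp only [mul_sub, sin_sub]
  field_simp
  ring

theorem oneJ_eq_oddSineSum (J : ℕ) (x a b : ℝ) :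
    oneJ J x a b = gfun 0 a b +
      2 / π * ((if b < 1 then 1 else 0) * oddSineSum J (b - x) +
        (if 0 < a then 1 else 0) * oddSineSum J (x - a)) := by
  induction J with
  | zero => simp [oneJ, cfun, oddSineSum]
  | succ J ih =>
    have hsucc : oneJ (J + 1) x a b = oneJ J x a b + (cfun (2 * J + 1) x * gfun (2 * J + 1) a b +
        cfun (2 * J + 2) x * gfun (2 * J + 2) a b) := by
      rw [oneJ, oneJ, show 2 * (J + 1) + 1 = 2 * J + 1 + 1 + 1 by ring, sum_range_succ,
        sum_range_succ, add_assoc]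
    rw [hsucc, ih, cfun_mul_gfun_add_cfun_mul_gfun]
    simp only [oddSineSum, sum_range_succ]
    ring

theorem abs_gfun_zero_le (a b : ℝ) : |gfun 0 a b| ≤ 1 := by
  simp only [gfun, if_true]
  split_ifs <;> norm_num

theorem abs_ite_one_zero_mul_le (P : Prop) [Decidable P] (s : ℝ) :
    |(if P then 1 else 0) * s| ≤ |s| := by
  split_ifs <;> simp

theorem abs_oneJ_le {x a b : ℝ} (hx : x ∈ Set.Icc 0 1) (ha : a ∈ Set.Icc 0 1)
    (hb : b ∈ Set.Icc 0 1) (J : ℕ) : |oneJ J x a b| ≤ 9 := by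
  have hbx : |b - x| ≤ 1 :=
    abs_sub_le_iff.2 ⟨by linarith [hb.2, hx.1], by linarith [hb.1, hx.2]⟩
  have hxa : |x - a| ≤ 1 :=
    abs_sub_le_iff.2 ⟨by linarith [hx.2, ha.1], by linarith [hx.1, ha.2]⟩
  have hpi : 2 / π ≤ 1 := by
    rw [div_le_one pi_pos]
    linarith [pi_gt_three]
  rw [oneJ_eq_oddSineSum]
  calc _ ≤ |gfun 0 a b| + 2 / π * (|oddSineSum J (b - x)| + |oddSineSum J (x - a)|) := by
        refine (abs_add_le _ _).trans (add_le_add le_rfl ?_)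
        rw [abs_mul, abs_of_pos (by positivity : (0 : ℝ) < 2 / π)]
        gcongr
        exact (abs_add_le _ _).trans
          (add_le_add (abs_ite_one_zero_mul_le _ _) (abs_ite_one_zero_mul_le _ _))
    _ ≤ 1 + 1 * (4 + 4) := by
        gcongr
        · exact abs_gfun_zero_le a b
        · exact abs_oddSineSum_le hbx J
        · exact abs_oddSineSum_le hxa J
    _ = 9 := by norm_num

theorem oneJp_uniformly_bounded_general (p : ℕ) (a b : Fin p → ℝ)
    (ha : ∀ l, a l ∈ Set.Ico (0 : ℝ) 1) (hb : ∀ l, b l ∈ Set.Ioc (0 : ℝ) 1) :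
    ∃ M : ℝ, ∀ (J : ℕ), ∀ x : Fin p → ℝ, (∀ l, x l ∈ Set.Ioo (0 : ℝ) 1) →
      |oneJp J x a b| ≤ M := by
  refine ⟨9 ^ p, fun J x hx => ?_⟩
  rw [oneJp, abs_prod]
  calc ∏ l, |oneJ J (x l) (a l) (b l)| ≤ ∏ _l : Fin p, (9 : ℝ) :=
        prod_le_prod (fun _ _ => abs_nonneg _) fun l _ =>
          abs_oneJ_le (Set.Ioo_subset_Icc_self (hx l)) (Set.Ico_subset_Icc_self (ha l))
            (Set.Ioc_subset_Icc_self (hb l)) J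
    _ = 9 ^ p := by simp

/-- the p-dimensional partial sums {1_J(·,a,b)} are uniformly bounded on (0,1)^p. -/
theorem oneJp_uniformly_bounded (p : ℕ) (hp : 0 < p) (a b : Fin p → ℝ)
    (ha : ∀ l, a l ∈ Set.Ico (0 : ℝ) 1) (hb : ∀ l, b l ∈ Set.Ioc (0 : ℝ) 1)
    (hab : ∀ l, a l < b l) :
    ∃ M : ℝ, ∀ (J : ℕ), ∀ x : Fin p → ℝ, (∀ l, x l ∈ Set.Ioo (0 : ℝ) 1) →
      |oneJp J x a b| ≤ M :=
  oneJp_uniformly_bounded_general p a b ha hb
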